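/- Let H : E → ℝ be smooth, U ⊆ E an open set on which the elementary action ρ(x) = Σⱼ pⱼ ∂H/∂pⱼ(x) − H(x) is nonzero, and F : U → ℝ a smooth first integral (dF(x)(Z_H(x)) = 0 on U). Define the vector field ζ = (τ, ξ, η) on U by τ = ρ⁻¹ F − ρ⁻¹ Σⱼ (∂F/∂pⱼ) pⱼ, ξⁱ = ρ⁻¹ F ∂H/∂pᵢ − ρ⁻¹ Σⱼ (∂F/∂pⱼ) pⱼ ∂H/∂pᵢ + ∂F/∂pᵢ, ηⁱ = −ρ⁻¹ F ∂H/∂qᵢ + ρ⁻¹ Σⱼ (∂F/∂pⱼ) pⱼ ∂H/∂qᵢ − ∂F/∂qᵢ, for i = 1,…,n. Then ζ is a Noether symmetry on U with Noether integral F: L_ζ α_H = 0 on U and α_H(x)(ζ(x)) = F(x) for all x ∈ U. -/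

import Mathlib

/-!
With `τ = ρ⁻¹ (F − ∑ⱼ pⱼ ∂F/∂pⱼ)` the field is `ζ = τ Z_H + X_F`, where `X_F = (0, ∂F/∂p, −∂F/∂q)`.
Since `α_H(Z_H) = ρ` and `α_H(X_F) = ∑ⱼ pⱼ ∂F/∂pⱼ`, this choice of `τ` gives `α_H(ζ) = F`.
Cartan's formula then reads `L_ζ α_H = τ i_{Z_H} dα_H + i_{X_F} dα_H + dF`. The first term
vanishes because `Z_H` spans the kernel of `dα_H`, and `i_{X_F} dα_H = dF(Z_H) dt − dF`, which is
`−dF` for a first integral.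
-/

noncomputable section
open scoped ContDiff

/-- The extended phase space `E = ℝ × ℝⁿ × ℝⁿ`, with points `x = (t, q, p)`. -/
abbrev EE (n : ℕ) : Type := ℝ × (Fin n → ℝ) × (Fin n → ℝ)

/-- The Poincaré–Cartan 1-form `α_H = p dq − H dt`:
`α_H(x)(τ̂, ξ̂, η̂) = ∑ i, pᵢ ξ̂ᵢ − H(x) τ̂`. -/
def pcForm {n : ℕ} (H : EE n → ℝ) (x : EE n) : EE n →L[ℝ] ℝ :=
  (∑ i, x.2.2 i • ((ContinuousLinearMap.proj i).comp
      ((ContinuousLinearMap.fst ℝ (Fin n → ℝ) (Fin n → ℝ)).comp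
        (ContinuousLinearMap.snd ℝ ℝ ((Fin n → ℝ) × (Fin n → ℝ))))))
    - H x • ContinuousLinearMap.fst ℝ ℝ ((Fin n → ℝ) × (Fin n → ℝ))

/-- The vector field `Z_H(x) = (1, ∂H/∂p(x), −∂H/∂q(x))` of Hamilton's equations. -/
def ZH {n : ℕ} (H : EE n → ℝ) (x : EE n) : EE n :=
  (1, fun i => fderiv ℝ H x (0, 0, Pi.single i 1),
      fun i => - fderiv ℝ H x (0, Pi.single i 1, 0))

/-- The Lie derivative of a 1-form `α` along a vector field `ζ`:
`(L_ζ α)(x)(v) = (Dα(x)(ζ(x)))(v) + α(x)(Dζ(x)(v))`. -/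
def lieDeriv {n : ℕ} (ζ : EE n → EE n) (α : EE n → (EE n →L[ℝ] ℝ)) (x : EE n) :
    EE n →L[ℝ] ℝ :=
  fderiv ℝ α x (ζ x) + (α x).comp (fderiv ℝ ζ x)

/-- The exterior derivative of a 1-form:
`dα(x)(u,v) = (Dα(x)u)(v) − (Dα(x)v)(u)`. -/
def extDerivOneForm {n : ℕ} (α : EE n → (EE n →L[ℝ] ℝ)) (x u v : EE n) : ℝ :=
  fderiv ℝ α x u v - fderiv ℝ α x v u

/-- The elementary action `ρ(x) = ∑ⱼ pⱼ ∂H/∂pⱼ(x) − H(x)`. -/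
def elemAction {n : ℕ} (H : EE n → ℝ) (x : EE n) : ℝ :=
  (∑ j, x.2.2 j * fderiv ℝ H x (0, 0, Pi.single j 1)) - H x

open Filter Topology

def hamVF {n : ℕ} (F : EE n → ℝ) (x : EE n) : EE n :=
  (0, fun i => fderiv ℝ F x (0, 0, Pi.single i 1),
      fun i => - fderiv ℝ F x (0, Pi.single i 1, 0))

def pdqForm (n : ℕ) : EE n →L[ℝ] EE n →L[ℝ] ℝ :=
  ∑ i, (((ContinuousLinearMap.proj i).comp
      ((ContinuousLinearMap.snd ℝ (Fin n → ℝ) (Fin n → ℝ)).comp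
        (ContinuousLinearMap.snd ℝ ℝ ((Fin n → ℝ) × (Fin n → ℝ))))).smulRight
    ((ContinuousLinearMap.proj i).comp
      ((ContinuousLinearMap.fst ℝ (Fin n → ℝ) (Fin n → ℝ)).comp
        (ContinuousLinearMap.snd ℝ ℝ ((Fin n → ℝ) × (Fin n → ℝ))))))

section

variable {n : ℕ}

theorem clm_apply_eq_sum (L : EE n →L[ℝ] ℝ) (v : EE n) :
    L v = v.1 * L (1, 0, 0) + (∑ i, v.2.1 i * L (0, Pi.single i 1, 0))
      + ∑ i, v.2.2 i * L (0, 0, Pi.single i 1) := by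
  have hv : v = v.1 • ((1 : ℝ), (0 : Fin n → ℝ), (0 : Fin n → ℝ))
      + (∑ i, v.2.1 i • (((0 : ℝ), Pi.single i 1, (0 : Fin n → ℝ)) : EE n))
      + ∑ i, v.2.2 i • (((0 : ℝ), (0 : Fin n → ℝ), Pi.single i 1) : EE n) := by
    ext <;> simp [Prod.fst_sum, Prod.snd_sum, Pi.single_apply, Finset.sum_apply]
  conv_lhs => rw [hv]
  simp only [map_add, map_sum, map_smul, smul_eq_mul]

theorem pcForm_apply (H : EE n → ℝ) (x v : EE n) :
    pcForm H x v = (∑ i, x.2.2 i * v.2.1 i) - H x * v.1 := by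
  simp [pcForm]

theorem pcForm_eq_pdqForm_sub (H : EE n → ℝ) :
    pcForm H = fun x => pdqForm n x - H x • ContinuousLinearMap.fst ℝ ℝ _ := by
  funext x
  simp [pcForm, pdqForm]

theorem hasFDerivAt_pcForm {H : EE n → ℝ} {x : EE n} (hH : DifferentiableAt ℝ H x) :
    HasFDerivAt (pcForm H) (pdqForm n - (fderiv ℝ H x).smulRight
      (ContinuousLinearMap.fst ℝ ℝ ((Fin n → ℝ) × (Fin n → ℝ)))) x := by
  rw [pcForm_eq_pdqForm_sub]
  exact (pdqForm n).hasFDerivAt.sub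
    (hH.hasFDerivAt.smul_const (ContinuousLinearMap.fst ℝ ℝ ((Fin n → ℝ) × (Fin n → ℝ))))

theorem fderiv_pcForm_apply {H : EE n → ℝ} {x : EE n} (hH : DifferentiableAt ℝ H x)
    (u v : EE n) :
    fderiv ℝ (pcForm H) x u v = (∑ i, u.2.2 i * v.2.1 i) - fderiv ℝ H x u * v.1 := by
  simp [(hasFDerivAt_pcForm hH).fderiv, pdqForm, mul_comm]

theorem extDerivOneForm_pcForm {H : EE n → ℝ} {x : EE n} (hH : DifferentiableAt ℝ H x)
    (u v : EE n) :
    extDerivOneForm (pcForm H) x u v = (∑ i, u.2.2 i * v.2.1 i) - ∑ i, v.2.2 i * u.2.1 i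
      - fderiv ℝ H x u * v.1 + fderiv ℝ H x v * u.1 := by
  rw [extDerivOneForm, fderiv_pcForm_apply hH, fderiv_pcForm_apply hH]
  ring

theorem extDerivOneForm_smul_add_left {α : EE n → EE n →L[ℝ] ℝ} (x : EE n) (a : ℝ)
    (u w v : EE n) :
    extDerivOneForm α x (a • u + w) v = a * extDerivOneForm α x u v + extDerivOneForm α x w v := by
  simp only [extDerivOneForm, map_add, map_smul, _root_.add_apply,
    _root_.smul_apply, smul_eq_mul]
  ring

theorem pcForm_ZH (H : EE n → ℝ) (x : EE n) : pcForm H x (ZH H x) = elemAction H x := by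
  simp [pcForm_apply, ZH, elemAction]

theorem pcForm_hamVF (H F : EE n → ℝ) (x : EE n) :
    pcForm H x (hamVF F x) = ∑ j, fderiv ℝ F x (0, 0, Pi.single j 1) * x.2.2 j := by
  simp [pcForm_apply, hamVF, mul_comm]

theorem extDerivOneForm_pcForm_ZH {H : EE n → ℝ} {x : EE n} (hH : DifferentiableAt ℝ H x)
    (v : EE n) : extDerivOneForm (pcForm H) x (ZH H x) v = 0 := by
  rw [extDerivOneForm_pcForm hH, clm_apply_eq_sum (fderiv ℝ H x) v,
    clm_apply_eq_sum (fderiv ℝ H x) (ZH H x)]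
  simp only [ZH, neg_mul, Finset.sum_neg_distrib, mul_comm (v.2.1 _), mul_comm (v.2.2 _)]
  rw [Finset.sum_congr rfl fun i _ =>
    mul_comm (fderiv ℝ H x (0, Pi.single i 1, 0)) (fderiv ℝ H x (0, 0, Pi.single i 1))]
  ring

theorem extDerivOneForm_pcForm_hamVF {H : EE n → ℝ} {x : EE n} (hH : DifferentiableAt ℝ H x)
    (F : EE n → ℝ) (v : EE n) :
    extDerivOneForm (pcForm H) x (hamVF F x) v = fderiv ℝ F x (ZH H x) * v.1 - fderiv ℝ F x v := by
  rw [extDerivOneForm_pcForm hH, clm_apply_eq_sum (fderiv ℝ H x) (hamVF F x),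
    clm_apply_eq_sum (fderiv ℝ F x) v, clm_apply_eq_sum (fderiv ℝ F x) (ZH H x)]
  simp only [ZH, hamVF, neg_mul, Finset.sum_neg_distrib, mul_comm (v.2.1 _), mul_comm (v.2.2 _),
    mul_comm (fderiv ℝ H x _)]
  ring

/-- Cartan's formula. -/
theorem lieDeriv_apply {α : EE n → EE n →L[ℝ] ℝ} {ζ : EE n → EE n} {x : EE n}
    (hα : DifferentiableAt ℝ α x) (hζ : DifferentiableAt ℝ ζ x) (v : EE n) :
    lieDeriv ζ α x v = extDerivOneForm α x (ζ x) v + fderiv ℝ (fun y => α y (ζ y)) x v := by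
  rw [fderiv_clm_apply hα hζ, lieDeriv, extDerivOneForm]
  simp

theorem differentiableAt_fderiv_apply {F : EE n → ℝ} {x : EE n} (hF : ContDiffAt ℝ 2 F x)
    (v : EE n) : DifferentiableAt ℝ (fun y => fderiv ℝ F y v) x :=
  ((hF.fderiv_right le_rfl).clm_apply contDiffAt_const).differentiableAt one_ne_zero

theorem differentiableAt_hamVF {F : EE n → ℝ} {x : EE n} (hF : ContDiffAt ℝ 2 F x) :
    DifferentiableAt ℝ (hamVF F) x :=
  (differentiableAt_const _).prodMk <|
    (differentiableAt_pi.2 fun _ => differentiableAt_fderiv_apply hF _).prodMk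
      (differentiableAt_pi.2 fun _ => (differentiableAt_fderiv_apply hF _).neg)

theorem ZH_eq_add_hamVF (H : EE n → ℝ) : ZH H = fun x => (1, 0, 0) + hamVF H x := by
  funext x
  ext <;> simp [ZH, hamVF]

theorem differentiableAt_ZH {H : EE n → ℝ} {x : EE n} (hH : ContDiffAt ℝ 2 H x) :
    DifferentiableAt ℝ (ZH H) x := by
  rw [ZH_eq_add_hamVF]
  exact (differentiableAt_const _).add (differentiableAt_hamVF hH)

theorem differentiableAt_elemAction {H : EE n → ℝ} {x : EE n} (hH : ContDiffAt ℝ 2 H x) :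
    DifferentiableAt ℝ (elemAction H) x :=
  (DifferentiableAt.fun_sum fun j _ =>
      (by fun_prop : DifferentiableAt ℝ (fun y : EE n => y.2.2 j) x).mul
        (differentiableAt_fderiv_apply hH _)).sub
    (hH.differentiableAt two_ne_zero)

end

def noetherTime {n : ℕ} (H F : EE n → ℝ) (x : EE n) : ℝ :=
  (elemAction H x)⁻¹ * (F x - ∑ j, fderiv ℝ F x (0, 0, Pi.single j 1) * x.2.2 j)

def noetherField {n : ℕ} (H F : EE n → ℝ) (x : EE n) : EE n :=
  noetherTime H F x • ZH H x + hamVF F x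

section

variable {n : ℕ} {H F : EE n → ℝ} {x : EE n}

theorem pcForm_noetherField (hρ : elemAction H x ≠ 0) :
    pcForm H x (noetherField H F x) = F x := by
  rw [noetherField, map_add, map_smul, pcForm_ZH, pcForm_hamVF, noetherTime, smul_eq_mul]
  field_simp
  ring

theorem extDerivOneForm_pcForm_noetherField (hH : DifferentiableAt ℝ H x) (v : EE n) :
    extDerivOneForm (pcForm H) x (noetherField H F x) v
      = fderiv ℝ F x (ZH H x) * v.1 - fderiv ℝ F x v := by
  rw [noetherField, extDerivOneForm_smul_add_left, extDerivOneForm_pcForm_ZH hH,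
    extDerivOneForm_pcForm_hamVF hH, mul_zero, zero_add]

theorem differentiableAt_noetherField (hH : ContDiffAt ℝ 2 H x) (hF : ContDiffAt ℝ 2 F x)
    (hρ : elemAction H x ≠ 0) : DifferentiableAt ℝ (noetherField H F) x := by
  have hS : DifferentiableAt ℝ
      (fun y : EE n => ∑ j, fderiv ℝ F y (0, 0, Pi.single j 1) * y.2.2 j) x :=
    DifferentiableAt.fun_sum fun j _ => (differentiableAt_fderiv_apply hF _).mul (by fun_prop)
  have hτ : DifferentiableAt ℝ (noetherTime H F) x :=
    ((differentiableAt_elemAction hH).inv hρ).mul ((hF.differentiableAt two_ne_zero).sub hS)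
  exact (hτ.smul (differentiableAt_ZH hH)).add (differentiableAt_hamVF hF)

theorem lieDeriv_pcForm_eq_zero {ζ : EE n → EE n} (hH : ContDiffAt ℝ 2 H x)
    (hF : ContDiffAt ℝ 2 F x) (hζ : ζ =ᶠ[𝓝 x] noetherField H F)
    (hρ : ∀ᶠ y in 𝓝 x, elemAction H y ≠ 0) (hFint : fderiv ℝ F x (ZH H x) = 0) :
    lieDeriv ζ (pcForm H) x = 0 := by
  have hHx : DifferentiableAt ℝ H x := hH.differentiableAt two_ne_zero
  have hζx : DifferentiableAt ℝ ζ x :=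
    (differentiableAt_noetherField hH hF hρ.self_of_nhds).congr_of_eventuallyEq hζ
  have hαζ : fderiv ℝ (fun y => pcForm H y (ζ y)) x = fderiv ℝ F x := by
    refine EventuallyEq.fderiv_eq ?_
    filter_upwards [hζ, hρ] with y hζy hρy
    rw [hζy, pcForm_noetherField hρy]
  refine ContinuousLinearMap.ext fun v => ?_
  rw [lieDeriv_apply (hasFDerivAt_pcForm hHx).differentiableAt hζx, hαζ, hζ.self_of_nhds,
    extDerivOneForm_pcForm_noetherField hHx, hFint]
  simp

end

theorem inverse_noether_general {n : ℕ}
    (H : EE n → ℝ) (hH : ContDiff ℝ ∞ H)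
    (U : Set (EE n)) (hU : IsOpen U)
    (hρ : ∀ x ∈ U, elemAction H x ≠ 0)
    (F : EE n → ℝ) (hF : ContDiffOn ℝ ∞ F U)
    (hFint : ∀ x ∈ U, fderiv ℝ F x (ZH H x) = 0)
    (ζ : EE n → EE n)
    (hζ : ∀ x ∈ U, ζ x =
      ((elemAction H x)⁻¹ * F x
          - (elemAction H x)⁻¹ * ∑ j, fderiv ℝ F x (0, 0, Pi.single j 1) * x.2.2 j,
       fun i => (elemAction H x)⁻¹ * F x * fderiv ℝ H x (0, 0, Pi.single i 1)
          - (elemAction H x)⁻¹ * (∑ j, fderiv ℝ F x (0, 0, Pi.single j 1) * x.2.2 j)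
              * fderiv ℝ H x (0, 0, Pi.single i 1)
          + fderiv ℝ F x (0, 0, Pi.single i 1),
       fun i => - ((elemAction H x)⁻¹ * F x * fderiv ℝ H x (0, Pi.single i 1, 0))
          + (elemAction H x)⁻¹ * (∑ j, fderiv ℝ F x (0, 0, Pi.single j 1) * x.2.2 j)
              * fderiv ℝ H x (0, Pi.single i 1, 0)
          - fderiv ℝ F x (0, Pi.single i 1, 0))) :
    (∀ x ∈ U, lieDeriv ζ (pcForm H) x = 0) ∧ (∀ x ∈ U, pcForm H x (ζ x) = F x) := by
  have hζU : ∀ x ∈ U, ζ x = noetherField H F x := by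
    intro x hx
    rw [hζ x hx, noetherField, noetherTime]
    ext <;> simp [ZH, hamVF] <;> ring
  refine ⟨fun x hx => ?_, fun x hx => hζU x hx ▸ pcForm_noetherField (hρ x hx)⟩
  have hUx : U ∈ 𝓝 x := hU.mem_nhds hx
  exact lieDeriv_pcForm_eq_zero (hH.contDiffAt.of_le (WithTop.coe_le_coe.2 le_top))
    ((hF.contDiffAt hUx).of_le (WithTop.coe_le_coe.2 le_top)) (eventually_of_mem hUx hζU)
    (eventually_of_mem hUx hρ) (hFint x hx)

/-- inverse Noether theorem: on an open set `U` where the elementary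
action `ρ ≠ 0`, every first integral `F` of Hamilton's equations gives rise to a
Noether symmetry `ζ = (τ, ξ, η)` with `τ = ρ⁻¹F − ρ⁻¹∑ⱼ(∂F/∂pⱼ)pⱼ`,
`ξⁱ = ρ⁻¹F ∂H/∂pᵢ − ρ⁻¹∑ⱼ(∂F/∂pⱼ)pⱼ ∂H/∂pᵢ + ∂F/∂pᵢ`,
`ηⁱ = −ρ⁻¹F ∂H/∂qᵢ + ρ⁻¹∑ⱼ(∂F/∂pⱼ)pⱼ ∂H/∂qᵢ − ∂F/∂qᵢ`:
it satisfies `L_ζ α_H = 0` on `U` and its Noether integral is `α_H(ζ) = F`. -/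
theorem inverse_noether {n : ℕ} (hn : 1 ≤ n)
    (H : EE n → ℝ) (hH : ContDiff ℝ ∞ H)
    (U : Set (EE n)) (hU : IsOpen U)
    (hρ : ∀ x ∈ U, elemAction H x ≠ 0)
    (F : EE n → ℝ) (hF : ContDiffOn ℝ ∞ F U)
    (hFint : ∀ x ∈ U, fderiv ℝ F x (ZH H x) = 0)
    (ζ : EE n → EE n)
    (hζ : ∀ x ∈ U, ζ x =
      ((elemAction H x)⁻¹ * F x
          - (elemAction H x)⁻¹ * ∑ j, fderiv ℝ F x (0, 0, Pi.single j 1) * x.2.2 j,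
       fun i => (elemAction H x)⁻¹ * F x * fderiv ℝ H x (0, 0, Pi.single i 1)
          - (elemAction H x)⁻¹ * (∑ j, fderiv ℝ F x (0, 0, Pi.single j 1) * x.2.2 j)
              * fderiv ℝ H x (0, 0, Pi.single i 1)
          + fderiv ℝ F x (0, 0, Pi.single i 1),
       fun i => - ((elemAction H x)⁻¹ * F x * fderiv ℝ H x (0, Pi.single i 1, 0))
          + (elemAction H x)⁻¹ * (∑ j, fderiv ℝ F x (0, 0, Pi.single j 1) * x.2.2 j)
              * fderiv ℝ H x (0, Pi.single i 1, 0)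
          - fderiv ℝ F x (0, Pi.single i 1, 0))) :
    (∀ x ∈ U, lieDeriv ζ (pcForm H) x = 0) ∧ (∀ x ∈ U, pcForm H x (ζ x) = F x) :=
  inverse_noether_general H hH U hU hρ F hF hFint ζ hζ
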